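/- Gap between consecutive optimal values at unconcentrated beliefs: suppose belief b satisfies b(m) ≤ 1 − δ for every type m, all entries of P are at most 1 − c, within each row of P distinct types' entries differ by at least c, and 0 < c ≤ δ ≤ 1/2. If k* is the first action of an optimal policy at b (with p_{k*}(b) > 0), then V*(τ(b,k*)) − V*(b) ≥ δ(1−δ)c²/(1−c). -/

import Mathlib

open Finset

/-- Value of policy `π` under belief `b`. -/
noncomputable def V {K M : Type*} [Fintype M] (P : K → M → ℝ) (π : ℕ → K)
    (b : M → ℝ) : ℝ :=
  ∑ m : M, b m * ∑' t : ℕ, ∏ j ∈ Finset.range (t + 1), P (π j) m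

/-- Optimal value function. -/
noncomputable def Vstar {K M : Type*} [Fintype M] (P : K → M → ℝ)
    (b : M → ℝ) : ℝ := ⨆ π : ℕ → K, V P π b

/-- Expected immediate reward of category `k` under belief `b`. -/
noncomputable def p {K M : Type*} [Fintype M] (P : K → M → ℝ) (k : K)
    (b : M → ℝ) : ℝ := ∑ m : M, b m * P k m

/-- Bayesian update of `b` after positive feedback on `k`. -/
noncomputable def tau {K M : Type*} [Fintype M] (P : K → M → ℝ) (b : M → ℝ)
    (k : K) : M → ℝ := fun m => b m * P k m / p P k b

section Aux

variable {K M : Type*} [Fintype M] {P : K → M → ℝ} {c : ℝ}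

lemma prod_le_geom (hP0 : ∀ k m, 0 ≤ P k m) (hP1 : ∀ k m, P k m ≤ 1 - c)
    (π : ℕ → K) (m : M) (t : ℕ) :
    ∏ j ∈ range (t + 1), P (π j) m ≤ (1 - c) ^ (t + 1) := by
  calc ∏ j ∈ range (t + 1), P (π j) m ≤ ∏ _j ∈ range (t + 1), (1 - c) :=
        Finset.prod_le_prod (fun j _ => hP0 _ _) (fun j _ => hP1 _ _)
    _ = (1 - c) ^ (t + 1) := by rw [Finset.prod_const, Finset.card_range]

lemma summable_prod (hc0 : 0 < c) (hP0 : ∀ k m, 0 ≤ P k m)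
    (hP1 : ∀ k m, P k m ≤ 1 - c) (π : ℕ → K) (m : M) :
    Summable (fun t : ℕ => ∏ j ∈ range (t + 1), P (π j) m) := by
  have h0 : (0:ℝ) ≤ 1 - c := le_trans (hP0 (π 0) m) (hP1 (π 0) m)
  have h1 : (1:ℝ) - c < 1 := by linarith
  have hg : Summable (fun t : ℕ => (1 - c) ^ (t + 1)) := by
    simpa [pow_succ] using (summable_geometric_of_lt_one h0 h1).mul_right (1 - c)
  exact Summable.of_nonneg_of_le
    (fun t => Finset.prod_nonneg (fun j _ => hP0 _ _))
    (prod_le_geom hP0 hP1 π m) hg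

lemma tsum_prod_nonneg (hP0 : ∀ k m, 0 ≤ P k m) (π : ℕ → K) (m : M) :
    0 ≤ ∑' t : ℕ, ∏ j ∈ range (t + 1), P (π j) m :=
  tsum_nonneg (fun t => Finset.prod_nonneg (fun j _ => hP0 _ _))

lemma tsum_prod_le (hc0 : 0 < c) (hP0 : ∀ k m, 0 ≤ P k m)
    (hP1 : ∀ k m, P k m ≤ 1 - c) (π : ℕ → K) (m : M) :
    ∑' t : ℕ, ∏ j ∈ range (t + 1), P (π j) m ≤ (1 - c) / c := by
  have h0 : (0:ℝ) ≤ 1 - c := le_trans (hP0 (π 0) m) (hP1 (π 0) m)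
  have h1 : (1:ℝ) - c < 1 := by linarith
  have hg : Summable (fun t : ℕ => (1 - c) ^ (t + 1)) := by
    simpa [pow_succ] using (summable_geometric_of_lt_one h0 h1).mul_right (1 - c)
  have := Summable.tsum_le_tsum (prod_le_geom hP0 hP1 π m) (summable_prod hc0 hP0 hP1 π m) hg
  refine this.trans (le_of_eq ?_)
  have : ∑' t : ℕ, (1 - c) ^ (t + 1) = (∑' t : ℕ, (1 - c) ^ t) * (1 - c) := by
    rw [← tsum_mul_right]
    exact tsum_congr fun t => pow_succ _ _
  rw [this, tsum_geometric_of_lt_one h0 h1]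
  rw [show (1:ℝ) - (1 - c) = c by ring, inv_mul_eq_div]

lemma V_nonneg (hP0 : ∀ k m, 0 ≤ P k m) (π : ℕ → K) (b : M → ℝ)
    (hb0 : ∀ m, 0 ≤ b m) : 0 ≤ V P π b :=
  Finset.sum_nonneg fun m _ => mul_nonneg (hb0 m) (tsum_prod_nonneg hP0 π m)

lemma V_le (hc0 : 0 < c) (hP0 : ∀ k m, 0 ≤ P k m) (hP1 : ∀ k m, P k m ≤ 1 - c)
    (π : ℕ → K) (b : M → ℝ) (hb0 : ∀ m, 0 ≤ b m) (hbsum : ∑ m : M, b m = 1) :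
    V P π b ≤ (1 - c) / c := by
  calc V P π b ≤ ∑ m : M, b m * ((1 - c) / c) :=
        Finset.sum_le_sum fun m _ =>
          mul_le_mul_of_nonneg_left (tsum_prod_le hc0 hP0 hP1 π m) (hb0 m)
    _ = (1 - c) / c := by rw [← Finset.sum_mul, hbsum, one_mul]

lemma bddAbove_V (hc0 : 0 < c) (hP0 : ∀ k m, 0 ≤ P k m)
    (hP1 : ∀ k m, P k m ≤ 1 - c) (b : M → ℝ) (hb0 : ∀ m, 0 ≤ b m)
    (hbsum : ∑ m : M, b m = 1) :
    BddAbove (Set.range fun π : ℕ → K => V P π b) := by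
  refine ⟨(1 - c) / c, ?_⟩
  rintro x ⟨π, rfl⟩
  exact V_le hc0 hP0 hP1 π b hb0 hbsum

lemma V_const (hc0 : 0 < c) (hP0 : ∀ k m, 0 ≤ P k m)
    (hP1 : ∀ k m, P k m ≤ 1 - c) (k : K) (b : M → ℝ) :
    V P (fun _ => k) b = ∑ m : M, b m * (P k m / (1 - P k m)) := by
  unfold V
  refine Finset.sum_congr rfl fun m _ => ?_
  congr 1
  have h0 : 0 ≤ P k m := hP0 k m
  have h1 : P k m < 1 := lt_of_le_of_lt (hP1 k m) (by linarith)
  have hx : ∀ t : ℕ, ∏ j ∈ range (t + 1), P k m = (P k m) ^ t * P k m := by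
    intro t; rw [Finset.prod_const, Finset.card_range, pow_succ]
  rw [tsum_congr hx, tsum_mul_right, tsum_geometric_of_lt_one h0 h1, inv_mul_eq_div]

lemma V_rec (hc0 : 0 < c) (hP0 : ∀ k m, 0 ≤ P k m) (hP1 : ∀ k m, P k m ≤ 1 - c)
    (b : M → ℝ) (k : K) (π : ℕ → K) (hπ0 : π 0 = k) (hp : p P k b ≠ 0) :
    V P π b = p P k b * (1 + V P (fun t => π (t + 1)) (tau P b k)) := by
  have key : ∀ m : M, (∑' t : ℕ, ∏ j ∈ range (t + 1), P (π j) m)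
      = P k m * (1 + ∑' t : ℕ, ∏ j ∈ range (t + 1), P (π (j + 1)) m) := by
    intro m
    rw [Summable.tsum_eq_zero_add (summable_prod hc0 hP0 hP1 π m)]
    have h0 : ∏ j ∈ range (0 + 1), P (π j) m = P k m := by
      rw [Finset.prod_range_one, hπ0]
    have hsucc : ∀ t : ℕ, ∏ j ∈ range (t + 1 + 1), P (π j) m
        = (∏ j ∈ range (t + 1), P (π (j + 1)) m) * P k m := by
      intro t
      rw [Finset.prod_range_succ']
      rw [hπ0]
    rw [h0, tsum_congr hsucc, tsum_mul_right]
    ring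
  have hterm : ∀ m : M,
      p P k b * (b m * P k m / p P k b * ∑' t : ℕ, ∏ j ∈ range (t + 1), P (π (j + 1)) m)
        = b m * (P k m * ∑' t : ℕ, ∏ j ∈ range (t + 1), P (π (j + 1)) m) := by
    intro m
    field_simp
  unfold V tau
  beta_reduce
  have e1 : ∑ m : M, b m * ∑' t : ℕ, ∏ j ∈ range (t + 1), P (π j) m
      = ∑ m : M, b m * (P k m * (1 + ∑' t : ℕ, ∏ j ∈ range (t + 1), P (π (j + 1)) m)) :=
    Finset.sum_congr rfl fun m _ => by rw [key m]
  rw [e1, mul_add, mul_one, Finset.mul_sum]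
  rw [Finset.sum_congr rfl fun m _ => hterm m]
  unfold p
  rw [← Finset.sum_add_distrib]
  exact Finset.sum_congr rfl fun m _ => by ring

lemma bregman (x q : ℝ) (hx0 : 0 ≤ x) (hx1 : x < 1) (hq1 : q < 1) :
    q / (1 - q) + (x - q) / (1 - q) ^ 2 + (x - q) ^ 2 / (1 - q) ^ 2 ≤ x / (1 - x) := by
  have h1 : 0 < 1 - x := by linarith
  have h2 : 0 < 1 - q := by linarith
  have key : x / (1 - x) - (q / (1 - q) + (x - q) / (1 - q) ^ 2)
      = (x - q) ^ 2 / ((1 - x) * (1 - q) ^ 2) := by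
    field_simp
    ring
  have h3 : (x - q) ^ 2 / (1 - q) ^ 2 ≤ (x - q) ^ 2 / ((1 - x) * (1 - q) ^ 2) := by
    apply div_le_div_of_nonneg_left (sq_nonneg _) (by positivity)
    nlinarith [sq_nonneg (1 - q)]
  linarith

lemma jensen {b x : M → ℝ} (hb0 : ∀ m, 0 ≤ b m) (hbsum : ∑ m : M, b m = 1)
    (hx0 : ∀ m, 0 ≤ x m) (hx1 : ∀ m, x m < 1)
    (q : ℝ) (hq : q = ∑ m : M, b m * x m) (hq1 : q < 1) :
    q / (1 - q) + (∑ m : M, b m * (x m - q) ^ 2) / (1 - q) ^ 2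
      ≤ ∑ m : M, b m * (x m / (1 - x m)) := by
  have step : ∑ m : M, b m * (q / (1 - q) + (x m - q) / (1 - q) ^ 2 + (x m - q) ^ 2 / (1 - q) ^ 2)
      ≤ ∑ m : M, b m * (x m / (1 - x m)) :=
    Finset.sum_le_sum fun m _ =>
      mul_le_mul_of_nonneg_left (bregman (x m) q (hx0 m) (hx1 m) hq1) (hb0 m)
  refine le_trans (le_of_eq ?_) step
  have expand : ∀ m : M,
      b m * (q / (1 - q) + (x m - q) / (1 - q) ^ 2 + (x m - q) ^ 2 / (1 - q) ^ 2)
      = b m * (q / (1 - q)) + (b m * x m - q * b m) / (1 - q) ^ 2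
          + b m * (x m - q) ^ 2 / (1 - q) ^ 2 := by
    intro m; ring
  rw [Finset.sum_congr rfl fun m _ => expand m, Finset.sum_add_distrib,
    Finset.sum_add_distrib, ← Finset.sum_mul, hbsum, one_mul, ← Finset.sum_div,
    Finset.sum_sub_distrib, ← hq, ← Finset.mul_sum, hbsum, mul_one, sub_self, zero_div,
    add_zero, ← Finset.sum_div]

lemma var_lb {b x : M → ℝ} {c δ : ℝ} (hb0 : ∀ m, 0 ≤ b m) (hbsum : ∑ m : M, b m = 1)
    (hunconc : ∀ m, b m ≤ 1 - δ) (hsep : ∀ m m' : M, m ≠ m' → c ≤ |x m - x m'|)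
    (hc0 : 0 ≤ c) (hδ0 : 0 ≤ δ) (q : ℝ) (hq : q = ∑ m : M, b m * x m) :
    δ * c ^ 2 / 2 ≤ ∑ m : M, b m * (x m - q) ^ 2 := by
  classical
  set Q : ℝ := ∑ m : M, b m * (x m) ^ 2 with hQ
  have inner : ∀ m : M, ∑ m' : M, b m' * (x m - x m') ^ 2
      = (x m) ^ 2 - 2 * x m * q + Q := by
    intro m
    have e : ∀ m' : M, b m' * (x m - x m') ^ 2
        = (x m) ^ 2 * b m' - 2 * x m * (b m' * x m') + b m' * (x m') ^ 2 := fun m' => by ring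
    rw [Finset.sum_congr rfl fun m' _ => e m', Finset.sum_add_distrib, Finset.sum_sub_distrib,
      ← Finset.mul_sum, hbsum, ← Finset.mul_sum, ← hq, mul_one, ← hQ]
  have hVar : ∑ m : M, b m * (x m - q) ^ 2 = Q - q ^ 2 := by
    have e : ∀ m : M, b m * (x m - q) ^ 2
        = b m * (x m) ^ 2 - 2 * q * (b m * x m) + q ^ 2 * b m := fun m => by ring
    rw [Finset.sum_congr rfl fun m _ => e m, Finset.sum_add_distrib, Finset.sum_sub_distrib,
      ← Finset.mul_sum, ← Finset.mul_sum, ← hq, hbsum, mul_one, ← hQ]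
    ring
  have hdouble : ∑ m : M, b m * ∑ m' : M, b m' * (x m - x m') ^ 2
      = 2 * ∑ m : M, b m * (x m - q) ^ 2 := by
    rw [Finset.sum_congr rfl fun m _ => by rw [inner m], hVar]
    have e : ∀ m : M, b m * ((x m) ^ 2 - 2 * x m * q + Q)
        = b m * (x m) ^ 2 - 2 * q * (b m * x m) + Q * b m := fun m => by ring
    rw [Finset.sum_congr rfl fun m _ => e m, Finset.sum_add_distrib, Finset.sum_sub_distrib,
      ← Finset.mul_sum, ← Finset.mul_sum, ← hq, hbsum, mul_one, ← hQ]
    ring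
  have hlow : ∀ m : M, δ * c ^ 2 * b m ≤ b m * ∑ m' : M, b m' * (x m - x m') ^ 2 := by
    intro m
    have h1 : ∑ m' ∈ univ.erase m, b m' * c ^ 2 ≤ ∑ m' ∈ univ.erase m, b m' * (x m - x m') ^ 2 := by
      refine Finset.sum_le_sum fun m' hm' => ?_
      have hne : m ≠ m' := (Finset.ne_of_mem_erase hm').symm
      have habs := hsep m m' hne
      have : c ^ 2 ≤ |x m - x m'| ^ 2 := pow_le_pow_left₀ hc0 habs 2
      rw [sq_abs] at this
      exact mul_le_mul_of_nonneg_left this (hb0 m')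
    have h2 : ∑ m' ∈ univ.erase m, b m' * (x m - x m') ^ 2
        ≤ ∑ m' : M, b m' * (x m - x m') ^ 2 :=
      Finset.sum_le_sum_of_subset_of_nonneg (Finset.subset_univ _)
        (fun m' _ _ => mul_nonneg (hb0 m') (sq_nonneg _))
    have h3 : ∑ m' ∈ univ.erase m, b m' * c ^ 2 = (1 - b m) * c ^ 2 := by
      rw [← Finset.sum_mul]
      have := Finset.sum_erase_add univ b (Finset.mem_univ m)
      have h4 : ∑ m' ∈ univ.erase m, b m' = 1 - b m := by
        rw [hbsum] at this; linarith
      rw [h4]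
    have h5 : δ ≤ 1 - b m := by linarith [hunconc m]
    have hS : δ * c ^ 2 ≤ ∑ m' : M, b m' * (x m - x m') ^ 2 := by
      have := mul_le_mul_of_nonneg_right h5 (sq_nonneg c)
      linarith
    calc δ * c ^ 2 * b m = b m * (δ * c ^ 2) := by ring
      _ ≤ b m * ∑ m' : M, b m' * (x m - x m') ^ 2 :=
          mul_le_mul_of_nonneg_left hS (hb0 m)
  have total : δ * c ^ 2 ≤ 2 * ∑ m : M, b m * (x m - q) ^ 2 := by
    rw [← hdouble]
    calc δ * c ^ 2 = ∑ m : M, δ * c ^ 2 * b m := by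
          rw [← Finset.mul_sum, hbsum, mul_one]
      _ ≤ _ := Finset.sum_le_sum fun m _ => hlow m
  linarith

lemma tau_nonneg (hP0 : ∀ k m, 0 ≤ P k m) (b : M → ℝ) (hb0 : ∀ m, 0 ≤ b m)
    (k : K) (hp : 0 < p P k b) : ∀ m, 0 ≤ tau P b k m := fun m =>
  div_nonneg (mul_nonneg (hb0 m) (hP0 k m)) hp.le

lemma tau_sum (b : M → ℝ) (k : K) (hp : p P k b ≠ 0) :
    ∑ m : M, tau P b k m = 1 := by
  unfold tau
  rw [← Finset.sum_div]
  exact div_self hp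

end Aux

/-- Gap between consecutive optimal values at unconcentrated beliefs: if `b` is
`δ`-unconcentrated, all entries of `P` are at most `1 − c`, entries of distinct
types in every row differ by at least `c`, `0 < c ≤ δ ≤ 1/2`, and `k*` is the
first action of an optimal policy at `b`, then
`V*(τ(b,k*)) − V*(b) ≥ δ(1−δ)c²/(1−c)`. -/
theorem optimal_value_gap {K M : Type*} [Fintype M] [Nonempty M] [Nonempty K]
    (P : K → M → ℝ) (c δ : ℝ) (hc0 : 0 < c) (hcδ : c ≤ δ) (hδ : δ ≤ 1 / 2)
    (hP0 : ∀ k m, 0 ≤ P k m) (hP1 : ∀ k m, P k m ≤ 1 - c)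
    (hsep : ∀ k (m m' : M), m ≠ m' → c ≤ |P k m - P k m'|)
    (b : M → ℝ) (hb0 : ∀ m, 0 ≤ b m) (hbsum : ∑ m : M, b m = 1)
    (hunconc : ∀ m, b m ≤ 1 - δ)
    (kstar : K) (hp : 0 < p P kstar b)
    (π : ℕ → K) (hπ0 : π 0 = kstar) (hopt : V P π b = Vstar P b) :
    δ * (1 - δ) * c ^ 2 / (1 - c) ≤
      Vstar P (tau P b kstar) - Vstar P b := by
  classical
  set x : M → ℝ := fun m => P kstar m with hxdef
  set q : ℝ := p P kstar b with hqdef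
  have hq : q = ∑ m : M, b m * x m := rfl
  have hδ0 : 0 < δ := lt_of_lt_of_le hc0 hcδ
  have hple : q ≤ 1 - c := by
    rw [hq]
    calc ∑ m : M, b m * x m ≤ ∑ m : M, b m * (1 - c) :=
          Finset.sum_le_sum fun m _ => mul_le_mul_of_nonneg_left (hP1 kstar m) (hb0 m)
      _ = 1 - c := by rw [← Finset.sum_mul, hbsum, one_mul]
  have hc1 : c < 1 := by linarith [hp]
  have hq1 : q < 1 := by linarith
  have hq0 : 0 < q := hp
  have h1q : 0 < 1 - q := by linarith
  have hτ0 := tau_nonneg hP0 b hb0 kstar hp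
  have hτsum := tau_sum b kstar (ne_of_gt hp)
  have hrec := V_rec hc0 hP0 hP1 b kstar π hπ0 (ne_of_gt hp)
  set W : ℝ := V P (fun t => π (t + 1)) (tau P b kstar) with hWdef
  have hWle : W ≤ Vstar P (tau P b kstar) :=
    le_ciSup (bddAbove_V hc0 hP0 hP1 _ hτ0 hτsum) _
  have hconst : ∑ m : M, b m * (x m / (1 - x m)) ≤ Vstar P b := by
    rw [← V_const hc0 hP0 hP1 kstar b]
    exact le_ciSup (bddAbove_V hc0 hP0 hP1 b hb0 hbsum) _
  set A : ℝ := ∑ m : M, b m * (x m - q) ^ 2 with hAdef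
  have hx0 : ∀ m, 0 ≤ x m := fun m => hP0 kstar m
  have hx1 : ∀ m, x m < 1 := fun m => lt_of_le_of_lt (hP1 kstar m) (by linarith)
  have hJ : q / (1 - q) + A / (1 - q) ^ 2 ≤ Vstar P b :=
    le_trans (jensen hb0 hbsum hx0 hx1 q hq hq1) hconst
  have hA : δ * c ^ 2 / 2 ≤ A :=
    var_lb hb0 hbsum hunconc (fun m m' h => hsep kstar m m' h) hc0.le hδ0.le q hq
  have hVb : Vstar P b = q * (1 + W) := by rw [← hopt, hrec]
  have key : A / (q * (1 - q)) ≤ W - Vstar P b := by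
    rw [div_le_iff₀ (by positivity)]
    have h2 : (q / (1 - q) + A / (1 - q) ^ 2) * (1 - q) ^ 2 ≤ Vstar P b * (1 - q) ^ 2 :=
      mul_le_mul_of_nonneg_right hJ (sq_nonneg _)
    have h3 : (q / (1 - q) + A / (1 - q) ^ 2) * (1 - q) ^ 2 = q * (1 - q) + A := by
      field_simp
    have h4 : (W - q * (1 + W)) * (q * (1 - q)) = q * (1 + W) * (1 - q) ^ 2 - q * (1 - q) := by
      ring
    rw [hVb] at h2 ⊢
    linarith
  have hq14 : q * (1 - q) ≤ 1 / 4 := by nlinarith [sq_nonneg (q - 1 / 2)]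
  have h5 : δ * c ^ 2 / 2 / (1 / 4) ≤ A / (q * (1 - q)) :=
    div_le_div₀ (le_trans (by positivity) hA) hA (by positivity) hq14
  have h6 : δ * (1 - δ) * c ^ 2 / (1 - c) ≤ δ * c ^ 2 / 2 / (1 / 4) := by
    rw [div_le_div_iff₀ (by linarith) (by norm_num)]
    nlinarith [sq_nonneg c, mul_pos hδ0 (mul_pos hc0 hc0)]
  have h7 : W - Vstar P b ≤ Vstar P (tau P b kstar) - Vstar P b := by linarith
  linarith
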